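/- arXiv:2208.14208 — 3 statements merged into one kernel-verified Lean document; each statement's English description precedes it below -/
import Mathlib

section
/- Let α, β, γ, δ ∈ ℂ, f(u) = u·θ(|u|²) with θ(s) = γ·s + δ·s², and let Df(V)z := θ(|V|²)z + |V|²θ'(|V|²)z + V²θ'(|V|²)conj(z) with θ'(s) = γ + 2δ·s. Let V : ℝ → ℂ be twice differentiable with α V'' + β V + f(V) = 0 on ℝ; let r_k, g_k : ℝ → ℝ (k = 1,…,n) be differentiable; set V_{ξ_k}(t,x) := e^{i g_k(t)} V(x − r_k(t)), V_Σ := Σ_{k=1}^n V_{ξ_k}, φ^r_{ξ_k} := −e^{i g_k}V'(·−r_k), φ^g_{ξ_k} := i e^{i g_k}V(·−r_k). Suppose w : ℝ × ℝ → ℂ has partial derivatives ∂_t w, ∂_x w, ∂_{xx} w, and that u := V_Σ + w satisfies the QCGLE ∂_t u = α ∂_{xx} u + β u + f(u). Then w satisfies ∂_t w − α ∂_{xx} w − β w − Df(V_Σ)w = −Σ_{k=1}^n r_k'(t)·φ^r_{ξ_k} − Σ_{k=1}^n g_k'(t)·φ^g_{ξ_k} + Φ + G, where Φ := f(V_Σ)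 − Σ_{k=1}^n f(V_{ξ_k}) is the interaction function and G := f(V_Σ + w) − f(V_Σ) − Df(V_Σ)w. -/
open Complex

/-- The QCGLE nonlinearity `f(u) = γ u|u|² + δ u|u|⁴ = u θ(|u|²)`. -/
noncomputable def qcgleF (γ δ : ℂ) (u : ℂ) : ℂ :=
  γ * u * (‖u‖ : ℂ) ^ 2 + δ * u * (‖u‖ : ℂ) ^ 4

/-- The real-linear Fréchet derivative of the QCGLE nonlinearity at `a`, applied to `z`:
`Df(a)z = θ(|a|²) z + |a|² θ'(|a|²) z + a² θ'(|a|²) conj z`. -/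
noncomputable def qcgleDf (γ δ : ℂ) (a z : ℂ) : ℂ :=
  (γ * (‖a‖ : ℂ) ^ 2 + δ * ((‖a‖ : ℂ) ^ 2) ^ 2) * z
    + (‖a‖ : ℂ) ^ 2 * (γ + 2 * δ * (‖a‖ : ℂ) ^ 2) * z
    + a ^ 2 * (γ + 2 * δ * (‖a‖ : ℂ) ^ 2) * (starRingEnd ℂ) z

/-- The multi-pulse ansatz `V_Σ(t,x) = Σ_k e^{i g_k(t)} V(x − r_k(t))`. -/
noncomputable def pulseSum (V : ℝ → ℂ) {n : ℕ} (r g : Fin n → ℝ → ℝ) (t x : ℝ) : ℂ :=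
  ∑ k : Fin n, Complex.exp (Complex.I * g k t) * V (x - r k t)

/-!
Substituting `u = V_Σ + w` into the QCGLE, the time derivative of each pulse `V_{ξ_k}`
contributes `r_k' φ^r_{ξ_k} + g_k' φ^g_{ξ_k}`, while `α V_{ξ_k}'' + β V_{ξ_k} = -f(V_{ξ_k})`
because `V` is steady and `f(e^{ia} z) = e^{ia} f(z)`. What remains is
`f(V_Σ + w) - Σ_k f(V_{ξ_k})`, which is `Df(V_Σ) w + Φ + G` by adding and subtracting `f(V_Σ)`
and `Df(V_Σ) w`.
-/

lemma qcgleF_mul_of_norm_eq_one (γ δ : ℂ) {u : ℂ} (hu : ‖u‖ = 1) (z : ℂ) :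
    qcgleF γ δ (u * z) = u * qcgleF γ δ z := by
  simp only [qcgleF, norm_mul, hu, one_mul]
  ring

lemma hasDerivAt_exp_mul_comp_sub {V : ℝ → ℂ} {r g : ℝ → ℝ} {V' : ℂ} {r' g' x t : ℝ}
    (hV : HasDerivAt V V' (x - r t)) (hr : HasDerivAt r r' t) (hg : HasDerivAt g g' t) :
    HasDerivAt (fun s => Complex.exp (Complex.I * g s) * V (x - r s))
      ((r' : ℂ) * (-Complex.exp (Complex.I * g t) * V')
        + (g' : ℂ) * (Complex.I * Complex.exp (Complex.I * g t) * V (x - r t))) t := by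
  have hphase := (hg.ofReal_comp.const_mul Complex.I).cexp
  have hshift : HasDerivAt (fun s => V (x - r s)) ((-r') • V') t :=
    hV.scomp t ((hasDerivAt_const t x).sub hr |>.congr_deriv (zero_sub r'))
  refine (hphase.mul hshift).congr_deriv ?_
  rw [Complex.real_smul, Complex.ofReal_neg]
  ring

section pulseSum

variable {V : ℝ → ℂ} {n : ℕ} {r g : Fin n → ℝ → ℝ}

lemma hasDerivAt_pulseSum_time (hV : Differentiable ℝ V) (hr : ∀ k, Differentiable ℝ (r k))
    (hg : ∀ k, Differentiable ℝ (g k)) (t x : ℝ) :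
    HasDerivAt (fun s => pulseSum V r g s x)
      (∑ k, Complex.ofReal (deriv (r k) t)
          * (-Complex.exp (Complex.I * g k t) * deriv V (x - r k t))
        + ∑ k, Complex.ofReal (deriv (g k) t)
          * (Complex.I * Complex.exp (Complex.I * g k t) * V (x - r k t))) t := by
  rw [← Finset.sum_add_distrib]
  exact HasDerivAt.fun_sum fun k _ =>
    hasDerivAt_exp_mul_comp_sub (hV _).hasDerivAt (hr k t).hasDerivAt (hg k t).hasDerivAt

lemma hasDerivAt_pulseSum_space (hV : Differentiable ℝ V) (t y : ℝ) :
    HasDerivAt (pulseSum V r g t) (pulseSum (deriv V) r g t y) y :=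
  HasDerivAt.fun_sum fun k _ => ((hV _).hasDerivAt.comp_sub_const y (r k t)).const_mul _

lemma pulseSum_steady {α β γ δ : ℂ} {W : ℝ → ℂ}
    (hVeq : ∀ x, α * W x + β * V x + qcgleF γ δ (V x) = 0) (t x : ℝ) :
    α * pulseSum W r g t x + β * pulseSum V r g t x
      + ∑ k, qcgleF γ δ (Complex.exp (Complex.I * g k t) * V (x - r k t)) = 0 := by
  simp only [pulseSum, Finset.mul_sum, ← Finset.sum_add_distrib,
    qcgleF_mul_of_norm_eq_one γ δ (Complex.norm_exp_I_mul_ofReal _)]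
  refine Finset.sum_eq_zero fun k _ => ?_
  linear_combination Complex.exp (Complex.I * g k t) * hVeq (x - r k t)

end pulseSum

/-- The exact equation satisfied by the remainder `w` in the multi-pulse decomposition
`u = V_Σ + w` of a solution of the QCGLE `∂_t u = α ∂_xx u + β u + f(u)`:
`∂_t w − α ∂_xx w − β w − Df(V_Σ)w = −Σ_k ṙ_k φ^r_{ξ_k} − Σ_k ġ_k φ^g_{ξ_k} + Φ + G`. -/
theorem remainder_equation
    (α β γ δ : ℂ) (V : ℝ → ℂ)
    (hV : Differentiable ℝ V) (hV' : Differentiable ℝ (deriv V))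
    (hVeq : ∀ x : ℝ, α * deriv (deriv V) x + β * V x + qcgleF γ δ (V x) = 0)
    {n : ℕ} (r g : Fin n → ℝ → ℝ)
    (hr : ∀ k, Differentiable ℝ (r k)) (hg : ∀ k, Differentiable ℝ (g k))
    (w : ℝ → ℝ → ℂ)
    (hwt : ∀ x : ℝ, Differentiable ℝ (fun t : ℝ => w t x))
    (hwx : ∀ t : ℝ, Differentiable ℝ (w t))
    (hwxx : ∀ t : ℝ, Differentiable ℝ (deriv (w t)))
    (hu : ∀ t x : ℝ,
      deriv (fun s : ℝ => pulseSum V r g s x + w s x) t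
        = α * deriv (deriv (fun y : ℝ => pulseSum V r g t y + w t y)) x
          + β * (pulseSum V r g t x + w t x)
          + qcgleF γ δ (pulseSum V r g t x + w t x)) :
    ∀ t x : ℝ,
      deriv (fun s : ℝ => w s x) t - α * deriv (deriv (w t)) x - β * w t x
          - qcgleDf γ δ (pulseSum V r g t x) (w t x)
        = -(∑ k : Fin n, (Complex.ofReal (deriv (r k) t))
              * (-(Complex.exp (Complex.I * g k t)) * deriv V (x - r k t)))
          - (∑ k : Fin n, (Complex.ofReal (deriv (g k) t))
              * (Complex.I * Complex.exp (Complex.I * g k t) * V (x - r k t)))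
          + (qcgleF γ δ (pulseSum V r g t x)
              - ∑ k : Fin n, qcgleF γ δ (Complex.exp (Complex.I * g k t) * V (x - r k t)))
          + (qcgleF γ δ (pulseSum V r g t x + w t x) - qcgleF γ δ (pulseSum V r g t x)
              - qcgleDf γ δ (pulseSum V r g t x) (w t x)) := by
  intro t x
  have E := hu t x
  rw [((hasDerivAt_pulseSum_time hV hr hg t x).fun_add (hwt x t).hasDerivAt).deriv] at E
  have hux : deriv (fun y => pulseSum V r g t y + w t y) = pulseSum (deriv V) r g t + deriv (w t) :=
    funext fun y => ((hasDerivAt_pulseSum_space hV t y).add (hwx t y).hasDerivAt).deriv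
  rw [hux, ((hasDerivAt_pulseSum_space hV' t x).add (hwxx t x).hasDerivAt).deriv] at E
  linear_combination E + pulseSum_steady hVeq t x
end

section
/- Let M₁, M₂, λ_r, λ_i, κ₁, κ₂ ∈ ℝ and define Θ^r(r, g) := M₁·e^{−λ_r|r|}·sin(g − λ_i|r| + κ₁) and Θ^g(r, g) := M₂·sgn(r)·e^{−λ_r|r|}·sin(g − λ_i|r| + κ₂). Suppose r₁, g₁, r₂, g₂ : ℝ → ℝ are differentiable, satisfy r₂(t) − r₁(t) > 0 for all t, and solve the two-pulse leading-order system r₁' = Θ^r(r₂−r₁, g₂−g₁), g₁' = Θ^g(r₂−r₁, g₂−g₁), r₂' = −Θ^r(r₁−r₂, g₁−g₂), g₂' = −Θ^g(r₁−r₂, g₁−g₂). Then the differences r̄ := r₂ − r₁ and ḡ := g₂ − g₁ satisfy the planar system r̄' = J·e^{−λ_r·r̄}·sin(−λ_i·r̄ + κ₁)·cos(ḡ) and ḡ' = −K·e^{−λ_r·r̄}·cos(−λ_i·r̄ + κ₂)·sin(ḡ) with J = −2M₁ and K = 2M₂. -/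
open Real

/-! The difference of the two pulse equations is driven by the symmetrised interaction
`-(Θ(ξ) + Θ(-ξ))` at `ξ = (r̄, ḡ)`. Flipping `ξ` flips the phase inside the sine and the sign of
`sgn r`, so `sin (c + ḡ) ± sin (c - ḡ)` produces the factors `2 sin c cos ḡ` and `2 cos c sin ḡ`;
for `r̄ > 0` the absolute values and the sign are resolved. -/

/-- The paper's `Θ^r`. -/
noncomputable def thetaR (M κ lr li r g : ℝ) : ℝ :=
  M * exp (-lr * |r|) * sin (g - li * |r| + κ)

/-- The paper's `Θ^g`. -/
noncomputable def thetaG (M κ lr li r g : ℝ) : ℝ :=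
  M * Real.sign r * exp (-lr * |r|) * sin (g - li * |r| + κ)

theorem thetaR_add_thetaR_neg (M κ lr li r g : ℝ) :
    thetaR M κ lr li r g + thetaR M κ lr li (-r) (-g)
      = 2 * M * exp (-lr * |r|) * sin (-li * |r| + κ) * cos g := by
  simp only [thetaR, abs_neg]
  rw [show g - li * |r| + κ = -li * |r| + κ + g by ring,
    show -g - li * |r| + κ = -li * |r| + κ - g by ring, sin_add, sin_sub]
  ring

theorem thetaG_add_thetaG_neg (M κ lr li r g : ℝ) :
    thetaG M κ lr li r g + thetaG M κ lr li (-r) (-g)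
      = 2 * M * Real.sign r * exp (-lr * |r|) * cos (-li * |r| + κ) * sin g := by
  simp only [thetaG, abs_neg, Real.sign_neg]
  rw [show g - li * |r| + κ = -li * |r| + κ + g by ring,
    show -g - li * |r| + κ = -li * |r| + κ - g by ring, sin_add, sin_sub]
  ring

theorem hasDerivAt_sub_of_pair {Θ : ℝ → ℝ → ℝ} {f₁ f₂ r₁ r₂ g₁ g₂ : ℝ → ℝ} {t : ℝ}
    (h₁ : HasDerivAt f₁ (Θ (r₂ t - r₁ t) (g₂ t - g₁ t)) t)
    (h₂ : HasDerivAt f₂ (-Θ (r₁ t - r₂ t) (g₁ t - g₂ t)) t) :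
    HasDerivAt (fun s => f₂ s - f₁ s)
      (-(Θ (r₂ t - r₁ t) (g₂ t - g₁ t) + Θ (-(r₂ t - r₁ t)) (-(g₂ t - g₁ t)))) t := by
  refine (h₂.sub h₁).congr_deriv ?_
  rw [neg_sub, neg_sub]; ring

/-- Reduction of the two-pulse leading-order system to the planar system for the
separation `r̄ = r₂ − r₁` and phase difference `ḡ = g₂ − g₁`, with `J = −2M₁`, `K = 2M₂`. -/
theorem two_pulse_planar_reduction
    (M₁ M₂ lr li κ₁ κ₂ : ℝ)
    (r₁ g₁ r₂ g₂ : ℝ → ℝ)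
    (hsep : ∀ t : ℝ, 0 < r₂ t - r₁ t)
    (hr₁ : ∀ t : ℝ, HasDerivAt r₁
      (M₁ * Real.exp (-lr * |r₂ t - r₁ t|)
        * Real.sin ((g₂ t - g₁ t) - li * |r₂ t - r₁ t| + κ₁)) t)
    (hg₁ : ∀ t : ℝ, HasDerivAt g₁
      (M₂ * Real.sign (r₂ t - r₁ t) * Real.exp (-lr * |r₂ t - r₁ t|)
        * Real.sin ((g₂ t - g₁ t) - li * |r₂ t - r₁ t| + κ₂)) t)
    (hr₂ : ∀ t : ℝ, HasDerivAt r₂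
      (-(M₁ * Real.exp (-lr * |r₁ t - r₂ t|)
        * Real.sin ((g₁ t - g₂ t) - li * |r₁ t - r₂ t| + κ₁))) t)
    (hg₂ : ∀ t : ℝ, HasDerivAt g₂
      (-(M₂ * Real.sign (r₁ t - r₂ t) * Real.exp (-lr * |r₁ t - r₂ t|)
        * Real.sin ((g₁ t - g₂ t) - li * |r₁ t - r₂ t| + κ₂))) t) :
    (∀ t : ℝ, HasDerivAt (fun s : ℝ => r₂ s - r₁ s)
      ((-2 * M₁) * Real.exp (-lr * (r₂ t - r₁ t))
        * Real.sin (-li * (r₂ t - r₁ t) + κ₁) * Real.cos (g₂ t - g₁ t)) t) ∧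
    (∀ t : ℝ, HasDerivAt (fun s : ℝ => g₂ s - g₁ s)
      (-((2 * M₂) * Real.exp (-lr * (r₂ t - r₁ t))
        * Real.cos (-li * (r₂ t - r₁ t) + κ₂) * Real.sin (g₂ t - g₁ t))) t) := by
  refine ⟨fun t => ?_, fun t => ?_⟩
  · refine (hasDerivAt_sub_of_pair (Θ := thetaR M₁ κ₁ lr li) (r₁ := r₁) (r₂ := r₂)
      (g₁ := g₁) (g₂ := g₂)
      (hr₁ t) (hr₂ t)).congr_deriv ?_
    rw [thetaR_add_thetaR_neg, abs_of_pos (hsep t)]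
    ring
  · refine (hasDerivAt_sub_of_pair (Θ := thetaG M₂ κ₂ lr li) (r₁ := r₁) (r₂ := r₂)
      (g₁ := g₁) (g₂ := g₂)
      (hg₁ t) (hg₂ t)).congr_deriv ?_
    rw [thetaG_add_thetaG_neg, abs_of_pos (hsep t), Real.sign_of_pos (hsep t)]
    ring
end

section
/- Let J, K, λ_r, λ_i, κ ∈ ℝ and suppose r̄, ḡ : I → ℝ are differentiable on an open interval I and solve the planar system r̄' = J·e^{−λ_r·r̄}·sin(−λ_i·r̄ + κ)·cos(ḡ), ḡ' = −K·e^{−λ_r·r̄}·cos(−λ_i·r̄ + κ)·sin(ḡ) (the case κ₁ = κ₂ = κ). Assume sin(ḡ(t)) ≠ 0 and sin(−λ_i·r̄(t) + κ) ≠ 0 for all t ∈ I. Then the function t ↦ J·λ_i·log|sin(ḡ(t))| − K·log|sin(−λ_i·r̄(t) + κ)| is constant on I. -/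
/-!
Along a solution, `d/dt log|sin ḡ| = cot ḡ · ḡ' = -K e^{-λ_r r̄} cos(-λ_i r̄ + κ) cos ḡ` and
`d/dt log|sin(-λ_i r̄ + κ)| = -λ_i cot(-λ_i r̄ + κ) · r̄' = -λ_i J e^{-λ_r r̄} cos(-λ_i r̄ + κ) cos ḡ`.
Both are multiples of the same product, so the combination `J λ_i log|sin ḡ| - K log|sin(-λ_i r̄ + κ)|`
has vanishing derivative and is constant on the (connected) interval.
-/

open Set

theorem HasDerivAt.log_abs_sin {f : ℝ → ℝ} {f' t : ℝ} (hf : HasDerivAt f f' t)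
    (hs : Real.sin (f t) ≠ 0) :
    HasDerivAt (fun t => Real.log |Real.sin (f t)|)
      (Real.cos (f t) * f' / Real.sin (f t)) t := by
  simpa only [Real.log_abs] using hf.sin.log hs

theorem exists_eq_const_on_Ioo_of_hasDerivAt_zero {F : ℝ → ℝ} {a b : ℝ}
    (hF : ∀ t ∈ Ioo a b, HasDerivAt F 0 t) : ∃ C, ∀ t ∈ Ioo a b, F t = C :=
  isOpen_Ioo.exists_is_const_of_deriv_eq_zero isPreconnected_Ioo
    (fun t ht => (hF t ht).differentiableAt.differentiableWithinAt)
    (fun t ht => (hF t ht).deriv)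

/-- First integral of the leading-order planar two-pulse system in the Hamiltonian-type
case `κ₁ = κ₂ = κ`: along any solution on an open interval on which `sin ḡ` and
`sin(−λ_i r̄ + κ)` do not vanish, the quantity
`J λ_i log|sin ḡ| − K log|sin(−λ_i r̄ + κ)|` is constant. -/
theorem planar_system_first_integral
    (J K lr li κ : ℝ) (a b : ℝ) (rbar gbar : ℝ → ℝ)
    (hr : ∀ t ∈ Set.Ioo a b, HasDerivAt rbar
      (J * Real.exp (-lr * rbar t) * Real.sin (-li * rbar t + κ) * Real.cos (gbar t)) t)
    (hg : ∀ t ∈ Set.Ioo a b, HasDerivAt gbar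
      (-(K * Real.exp (-lr * rbar t) * Real.cos (-li * rbar t + κ) * Real.sin (gbar t))) t)
    (hgs : ∀ t ∈ Set.Ioo a b, Real.sin (gbar t) ≠ 0)
    (hrs : ∀ t ∈ Set.Ioo a b, Real.sin (-li * rbar t + κ) ≠ 0) :
    ∃ C : ℝ, ∀ t ∈ Set.Ioo a b,
      J * li * Real.log |Real.sin (gbar t)|
        - K * Real.log |Real.sin (-li * rbar t + κ)| = C := by
  refine exists_eq_const_on_Ioo_of_hasDerivAt_zero fun t ht => ?_
  have hphase := (hg t ht).log_abs_sin (hgs t ht)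
  have hdist := (((hr t ht).const_mul (-li)).add_const κ).log_abs_sin (hrs t ht)
  refine ((hphase.const_mul (J * li)).sub (hdist.const_mul K)).congr_deriv ?_
  have hsg := hgs t ht
  have hsρ := hrs t ht
  -- otherwise `field_simp` rewrites `-li * rbar t` and no longer sees `hsρ`
  generalize Real.sin (gbar t) = sg at hsg ⊢
  generalize Real.sin (-li * rbar t + κ) = sρ at hsρ ⊢
  field_simp
  ring
end
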